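/- arXiv:1503.05029 — 2 statements merged into one kernel-verified Lean document; each statement's English description precedes it below -/
import Mathlib

section
/- In the perfect-model Kalman filter recursion, suppose Δ_0 is symmetric positive definite and the analysis covariances are uniformly bounded, i.e. there is a constant c_Δ with ‖Δ_n‖ ≤ c_Δ for all n ≥ 1. Then the matrices M_n are uniformly bounded: ‖M_n‖ ≤ √(c_Δ / λ_min(Δ_0)) for all n ≥ 1, where λ_min(Δ_0) > 0 is the smallest eigenvalue of Δ_0. -/
open Matrix Filter

/-- The operator (spectral) norm of a real matrix: the norm of the induced linear map
between Euclidean spaces. -/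
noncomputable def opNorm {d e : ℕ} (Z : Matrix (Fin e) (Fin d) ℝ) : ℝ :=
  ‖LinearMap.toContinuousLinearMap (Matrix.toEuclideanLin Z)‖

/-- Analysis error covariance `Δ_n` of the perfect-model Kalman filter recursion:
`Δ_0` is the initial covariance and, for `n ≥ 1`,
`Σ_n = A_n Δ_{n−1} A_nᵀ`, `K_n = Σ_n H_nᵀ (H_n Σ_n H_nᵀ + Q_n)⁻¹`,
`Δ_n = (I − K_n H_n) Σ_n`. -/
noncomputable def KFDelta {d q : ℕ} (A : ℕ → Matrix (Fin d) (Fin d) ℝ)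
    (H : ℕ → Matrix (Fin q) (Fin d) ℝ) (Q : ℕ → Matrix (Fin q) (Fin q) ℝ)
    (Δ0 : Matrix (Fin d) (Fin d) ℝ) : ℕ → Matrix (Fin d) (Fin d) ℝ
  | 0 => Δ0
  | n + 1 =>
      let S := A (n + 1) * KFDelta A H Q Δ0 n * (A (n + 1))ᵀ
      let K := S * (H (n + 1))ᵀ * (H (n + 1) * S * (H (n + 1))ᵀ + Q (n + 1))⁻¹
      (1 - K * H (n + 1)) * S

/-- Forecast error covariance: `KFSigma A H Q Δ0 n = Σ_{n+1} = A_{n+1} Δ_n A_{n+1}ᵀ`. -/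
noncomputable def KFSigma {d q : ℕ} (A : ℕ → Matrix (Fin d) (Fin d) ℝ)
    (H : ℕ → Matrix (Fin q) (Fin d) ℝ) (Q : ℕ → Matrix (Fin q) (Fin q) ℝ)
    (Δ0 : Matrix (Fin d) (Fin d) ℝ) (n : ℕ) : Matrix (Fin d) (Fin d) ℝ :=
  A (n + 1) * KFDelta A H Q Δ0 n * (A (n + 1))ᵀ

/-- Kalman gain: `KFGain A H Q Δ0 n = K_{n+1} = Σ_{n+1} H_{n+1}ᵀ (H_{n+1} Σ_{n+1} H_{n+1}ᵀ + Q_{n+1})⁻¹`. -/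
noncomputable def KFGain {d q : ℕ} (A : ℕ → Matrix (Fin d) (Fin d) ℝ)
    (H : ℕ → Matrix (Fin q) (Fin d) ℝ) (Q : ℕ → Matrix (Fin q) (Fin q) ℝ)
    (Δ0 : Matrix (Fin d) (Fin d) ℝ) (n : ℕ) : Matrix (Fin d) (Fin q) ℝ :=
  KFSigma A H Q Δ0 n * (H (n + 1))ᵀ *
    (H (n + 1) * KFSigma A H Q Δ0 n * (H (n + 1))ᵀ + Q (n + 1))⁻¹

/-- `KFM A H Q Δ0 n = M_n = (I − K_n H_n) A_n ⋯ (I − K_1 H_1) A_1` (with `M_0 = I`). -/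
noncomputable def KFM {d q : ℕ} (A : ℕ → Matrix (Fin d) (Fin d) ℝ)
    (H : ℕ → Matrix (Fin q) (Fin d) ℝ) (Q : ℕ → Matrix (Fin q) (Fin q) ℝ)
    (Δ0 : Matrix (Fin d) (Fin d) ℝ) : ℕ → Matrix (Fin d) (Fin d) ℝ
  | 0 => 1
  | n + 1 => (1 - KFGain A H Q Δ0 n * H (n + 1)) * A (n + 1) * KFM A H Q Δ0 n

/-- `KFB A n = B_{0:n} = A_n ⋯ A_1` (with `B_{0:0} = I`). -/
noncomputable def KFB {d : ℕ} (A : ℕ → Matrix (Fin d) (Fin d) ℝ) :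
    ℕ → Matrix (Fin d) (Fin d) ℝ
  | 0 => 1
  | n + 1 => A (n + 1) * KFB A n

/-- Propagator `KFBp A n m = B_{n:n+m} = A_{n+m} ⋯ A_{n+1}` (with `B_{n:n} = I`). -/
noncomputable def KFBp {d : ℕ} (A : ℕ → Matrix (Fin d) (Fin d) ℝ) (n : ℕ) :
    ℕ → Matrix (Fin d) (Fin d) ℝ
  | 0 => 1
  | m + 1 => A (n + m + 1) * KFBp A n m

/-- Uniform complete observability: there is `δ > 0` with
`det(Σ_{m=0}^{d−1} B_{n:n+m}ᵀ H_{n+m}ᵀ Q_{n+m}⁻¹ H_{n+m} B_{n:n+m}) ≥ δ` for all `n ≥ 1`. -/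
def UCO {d q : ℕ} (A : ℕ → Matrix (Fin d) (Fin d) ℝ)
    (H : ℕ → Matrix (Fin q) (Fin d) ℝ) (Q : ℕ → Matrix (Fin q) (Fin q) ℝ) : Prop :=
  ∃ δ > (0 : ℝ), ∀ n, 1 ≤ n →
    δ ≤ (∑ m ∈ Finset.range d,
      (KFBp A n m)ᵀ * (H (n + m))ᵀ * (Q (n + m))⁻¹ * H (n + m) * KFBp A n m).det

/-! The Joseph form of the analysis update, `Δ_n = F_n Δ_{n-1} F_nᵀ + K_n Q_n K_nᵀ` with
`F_n = (I - K_n H_n) A_n` and `M_n = F_n M_{n-1}`, gives by induction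
`M_n Δ_0 M_nᵀ ≤ Δ_n` in the Loewner order, and `λ_min(Δ_0) • 1 ≤ Δ_0` then yields
`λ_min(Δ_0) • M_n M_nᵀ ≤ Δ_n`. The spectral norm is monotone on positive semidefinite matrices
and `‖M Mᵀ‖ = ‖M‖²`, so `λ_min(Δ_0) ‖M_n‖² ≤ ‖Δ_n‖ ≤ c_Δ`. -/

open scoped ComplexOrder MatrixOrder Matrix.Norms.L2Operator

section RealCStarRing

variable {A : Type*} [NormedRing A] [StarRing A] [NormedAlgebra ℝ A] [PartialOrder A]
  [StarOrderedRing A] [IsometricContinuousFunctionalCalculus ℝ A IsSelfAdjoint]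
  [NonnegSpectrumClass ℝ A]

/-- The real analogue of `CStarAlgebra.norm_le_norm_of_nonneg_of_le`, which covers only complex
C⋆-algebras and so not `Matrix n n ℝ`. -/
theorem IsometricContinuousFunctionalCalculus.norm_le_norm_of_nonneg_of_le {a b : A}
    (ha : 0 ≤ a) (hab : a ≤ b) : ‖a‖ ≤ ‖b‖ := by
  have hb : IsSelfAdjoint b := .of_nonneg (ha.trans hab)
  have hb_le : b ≤ algebraMap ℝ A ‖b‖ := le_algebraMap_of_spectrum_le fun x hx =>
    (Real.le_norm_self x).trans (norm_spectrum_le b hx hb)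
  have ha_spec := (le_algebraMap_iff_spectrum_le (a := a)).mp (hab.trans hb_le)
  rw [← cfc_id' ℝ a]
  refine norm_cfc_le (norm_nonneg b) fun x hx => ?_
  rw [Real.norm_of_nonneg (spectrum_nonneg_of_nonneg ha hx)]
  exact ha_spec x hx

theorem CStarRing.mul_norm_sq_le_of_mul_mul_star_le [CStarRing A] [StarModule ℝ A]
    {a b c : A} {r : ℝ} (hr : 0 ≤ r) (hb : algebraMap ℝ A r ≤ b) (h : a * b * star a ≤ c) :
    r * ‖a‖ ^ 2 ≤ ‖c‖ := by
  set a' := √r • a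
  have hle : a' * star a' ≤ c := calc
    a' * star a' = a * algebraMap ℝ A r * star a := by
      rw [star_smul, star_trivial, smul_mul_smul_comm, Real.mul_self_sqrt hr,
        Algebra.algebraMap_eq_smul_one, mul_smul_one, smul_mul_assoc]
    _ ≤ a * b * star a := star_right_conjugate_le_conjugate hb a
    _ ≤ c := h
  calc r * ‖a‖ ^ 2 = ‖a' * star a'‖ := by
        rw [CStarRing.norm_self_mul_star, norm_smul, Real.norm_of_nonneg (Real.sqrt_nonneg r)]
        nlinarith [Real.sq_sqrt hr]
    _ ≤ ‖c‖ := IsometricContinuousFunctionalCalculus.norm_le_norm_of_nonneg_of_le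
        (mul_star_self_nonneg a') hle

end RealCStarRing

namespace Matrix

variable {n : Type*} [Fintype n]

theorem PosSemidef.mul_mul_transpose_nonneg {m : Type*} [Fintype m]
    {P : Matrix n n ℝ} (hP : P.PosSemidef) (C : Matrix m n ℝ) : 0 ≤ C * P * Cᵀ := by
  simpa only [conjTranspose_eq_transpose_of_trivial] using
    (hP.mul_mul_conjTranspose_same C).nonneg

variable [DecidableEq n]

theorem IsHermitian.algebraMap_iInf_eigenvalues_le {𝕜 : Type*} [RCLike 𝕜] {B : Matrix n n 𝕜}
    (hB : B.IsHermitian) : algebraMap ℝ (Matrix n n 𝕜) (⨅ i, hB.eigenvalues i) ≤ B := by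
  rw [algebraMap_le_iff_le_spectrum (a := B) hB.isSelfAdjoint,
    hB.spectrum_real_eq_range_eigenvalues]
  rintro _ ⟨i, rfl⟩
  exact ciInf_le (Set.finite_range _).bddBelow i

theorem PosDef.iInf_eigenvalues_pos [Nonempty n] {𝕜 : Type*} [RCLike 𝕜] {B : Matrix n n 𝕜}
    (hB : B.PosDef) : 0 < ⨅ i, hB.1.eigenvalues i := by
  obtain ⟨i, hi⟩ := Finite.exists_min hB.1.eigenvalues
  exact (hB.eigenvalues_pos i).trans_le (le_ciInf hi)

theorem l2_opNorm_le_sqrt_of_mul_mul_transpose_le {M B C : Matrix n n ℝ} (hB : B.PosDef)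
    (h : M * B * Mᵀ ≤ C) : ‖M‖ ≤ √(‖C‖ / ⨅ i, hB.1.eigenvalues i) := by
  cases isEmpty_or_nonempty n
  · rw [Subsingleton.elim M 0, norm_zero]
    exact Real.sqrt_nonneg _
  · have hpos := hB.iInf_eigenvalues_pos
    have := CStarRing.mul_norm_sq_le_of_mul_mul_star_le (a := M) (c := C) hpos.le
      hB.1.algebraMap_iInf_eigenvalues_le (by rwa [star_eq_conjTranspose,
        conjTranspose_eq_transpose_of_trivial])
    rw [Real.le_sqrt (norm_nonneg M) (div_nonneg (norm_nonneg C) hpos.le), le_div_iff₀ hpos]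
    linarith

end Matrix

theorem Matrix.joseph_form {R m n : Type*} [CommRing R] [Fintype m] [Fintype n] [DecidableEq n]
    {S : Matrix n n R} {H : Matrix m n R} {Q : Matrix m m R} {K : Matrix n m R}
    (hK : K * (H * S * Hᵀ + Q) = S * Hᵀ) :
    (1 - K * H) * S = (1 - K * H) * S * (1 - K * H)ᵀ + K * Q * Kᵀ := by
  have hKQ : (1 - K * H) * S * Hᵀ = K * Q := by
    rw [Matrix.mul_add, ← eq_sub_iff_add_eq'] at hK
    rw [hK]
    simp only [Matrix.sub_mul, Matrix.one_mul, Matrix.mul_assoc]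
  rw [transpose_sub, transpose_one, transpose_mul, Matrix.mul_sub, Matrix.mul_one,
    ← Matrix.mul_assoc, hKQ]
  abel

section KalmanFilter

variable {d q : ℕ} {A : ℕ → Matrix (Fin d) (Fin d) ℝ} {H : ℕ → Matrix (Fin q) (Fin d) ℝ}
  {Q : ℕ → Matrix (Fin q) (Fin q) ℝ} {Δ0 : Matrix (Fin d) (Fin d) ℝ}

theorem KFGain_mul_innovation_cov {n : ℕ} (hΔ : (KFDelta A H Q Δ0 n).PosSemidef)
    (hQ : (Q (n + 1)).PosDef) :
    KFGain A H Q Δ0 n * (H (n + 1) * KFSigma A H Q Δ0 n * (H (n + 1))ᵀ + Q (n + 1)) =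
      KFSigma A H Q Δ0 n * (H (n + 1))ᵀ := by
  have hS : (KFSigma A H Q Δ0 n).PosSemidef := (hΔ.mul_mul_transpose_nonneg _).posSemidef
  have hR := (Matrix.PosDef.posSemidef_add
    (hS.mul_mul_transpose_nonneg (H (n + 1))).posSemidef hQ).isUnit
  rw [KFGain, Matrix.mul_assoc, Matrix.nonsing_inv_mul _ ((isUnit_iff_isUnit_det _).mp hR),
    Matrix.mul_one]

theorem KFDelta_succ_eq_joseph {n : ℕ} (hΔ : (KFDelta A H Q Δ0 n).PosSemidef)
    (hQ : (Q (n + 1)).PosDef) :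
    KFDelta A H Q Δ0 (n + 1) =
      ((1 - KFGain A H Q Δ0 n * H (n + 1)) * A (n + 1)) * KFDelta A H Q Δ0 n *
          ((1 - KFGain A H Q Δ0 n * H (n + 1)) * A (n + 1))ᵀ +
        KFGain A H Q Δ0 n * Q (n + 1) * (KFGain A H Q Δ0 n)ᵀ := by
  rw [show KFDelta A H Q Δ0 (n + 1) = (1 - KFGain A H Q Δ0 n * H (n + 1)) * KFSigma A H Q Δ0 n
    from rfl, Matrix.joseph_form (KFGain_mul_innovation_cov hΔ hQ), KFSigma, transpose_mul]
  simp only [Matrix.mul_assoc]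

theorem KFM_mul_mul_transpose_le_KFDelta (hQ : ∀ n, 1 ≤ n → (Q n).PosDef)
    (hΔ0 : Δ0.PosSemidef) (n : ℕ) :
    KFM A H Q Δ0 n * Δ0 * (KFM A H Q Δ0 n)ᵀ ≤ KFDelta A H Q Δ0 n := by
  induction n with
  | zero => simp [KFM, KFDelta]
  | succ n ih =>
    set F := (1 - KFGain A H Q Δ0 n * H (n + 1)) * A (n + 1)
    have hΔ : (KFDelta A H Q Δ0 n).PosSemidef :=
      ((hΔ0.mul_mul_transpose_nonneg _).trans ih).posSemidef
    have hQn := hQ (n + 1) n.succ_pos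
    calc KFM A H Q Δ0 (n + 1) * Δ0 * (KFM A H Q Δ0 (n + 1))ᵀ
        = F * (KFM A H Q Δ0 n * Δ0 * (KFM A H Q Δ0 n)ᵀ) * Fᵀ := by
          simp only [KFM, F, transpose_mul, Matrix.mul_assoc]
      _ ≤ F * KFDelta A H Q Δ0 n * Fᵀ := by
          simpa only [star_eq_conjTranspose, conjTranspose_eq_transpose_of_trivial] using
            star_right_conjugate_le_conjugate ih F
      _ ≤ KFDelta A H Q Δ0 (n + 1) := by
          rw [KFDelta_succ_eq_joseph hΔ hQn]
          exact le_add_of_nonneg_right (hQn.posSemidef.mul_mul_transpose_nonneg _)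

end KalmanFilter

theorem kalman_M_uniformly_bounded_general
    {d q : ℕ} (A : ℕ → Matrix (Fin d) (Fin d) ℝ)
    (H : ℕ → Matrix (Fin q) (Fin d) ℝ) (Q : ℕ → Matrix (Fin q) (Fin q) ℝ)
    (Δ0 : Matrix (Fin d) (Fin d) ℝ)
    (hQ : ∀ n, 1 ≤ n → (Q n).PosDef)
    (hΔ0 : Δ0.PosDef)
    (cΔ : ℝ) (hbound : ∀ n, 1 ≤ n → opNorm (KFDelta A H Q Δ0 n) ≤ cΔ) :
    ∀ n, 1 ≤ n →
      opNorm (KFM A H Q Δ0 n) ≤ Real.sqrt (cΔ / ⨅ i, hΔ0.1.eigenvalues i) := by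
  intro n hn
  -- `opNorm` is definitionally the norm of `Matrix.Norms.L2Operator`.
  calc opNorm (KFM A H Q Δ0 n)
      ≤ √(‖KFDelta A H Q Δ0 n‖ / ⨅ i, hΔ0.1.eigenvalues i) :=
        l2_opNorm_le_sqrt_of_mul_mul_transpose_le hΔ0
          (KFM_mul_mul_transpose_le_KFDelta hQ hΔ0.posSemidef n)
    _ ≤ √(cΔ / ⨅ i, hΔ0.1.eigenvalues i) :=
        Real.sqrt_le_sqrt (div_le_div_of_nonneg_right (hbound n hn)
          (Real.iInf_nonneg fun i => (hΔ0.eigenvalues_pos i).le))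

/-- In the perfect-model Kalman filter recursion, if `Δ_0` is symmetric
positive definite and `‖Δ_n‖ ≤ c_Δ` for all `n ≥ 1`, then
`‖M_n‖ ≤ √(c_Δ / λ_min(Δ_0))` for all `n ≥ 1`, where `λ_min(Δ_0)` is the smallest
eigenvalue of `Δ_0`. -/
theorem kalman_M_uniformly_bounded
    {d q : ℕ} (A : ℕ → Matrix (Fin d) (Fin d) ℝ)
    (H : ℕ → Matrix (Fin q) (Fin d) ℝ) (Q : ℕ → Matrix (Fin q) (Fin q) ℝ)
    (Δ0 : Matrix (Fin d) (Fin d) ℝ)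
    (hA : ∀ n, 1 ≤ n → IsUnit (A n).det)
    (hQ : ∀ n, 1 ≤ n → (Q n).PosDef)
    (hΔ0 : Δ0.PosDef)
    (cΔ : ℝ) (hbound : ∀ n, 1 ≤ n → opNorm (KFDelta A H Q Δ0 n) ≤ cΔ) :
    ∀ n, 1 ≤ n →
      opNorm (KFM A H Q Δ0 n) ≤ Real.sqrt (cΔ / ⨅ i, hΔ0.1.eigenvalues i) :=
  kalman_M_uniformly_bounded_general A H Q Δ0 hQ hΔ0 cΔ hbound
end

section
/- Let λ ∈ ℂ, k ≥ 1, and let J_λ ∈ ℂ^{k×k} be the Jordan block with eigenvalue λ. For each n ≥ 1 let G_n = ((J_λ^n)ᴴ J_λ^n)^{1/(2n)}, the Hermitian positive semidefinite (1/2n)-th power (given by the continuous functional calculus) of the positive semidefinite matrix (J_λ^n)ᴴ J_λ^n. Then G_n converges to |λ| · I_k as n → ∞. -/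
/-!
Put `P = star (aⁿ) * aⁿ` in a C⋆-algebra. A spectral value `x` of `P` satisfies `x ≤ ‖aⁿ‖²`, and
when `a` is invertible `x⁻¹` is a spectral value of `P⁻¹ = star b * b` with `b = star (a⁻¹)ⁿ`,
so `(‖a⁻ⁿ‖²)⁻¹ ≤ x`. Hence `x ^ (1/2n)` lies between `(‖a⁻ⁿ‖ ^ (1/n))⁻¹` and `‖aⁿ‖ ^ (1/n)`.
If the spectrum of `a` lies on the circle `|z| = r`, Gelfand's formula sends both bounds to `r`
(for `r = 0` the lower bound is just `0`), and since the continuous functional calculus is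
isometric, `‖P ^ (1/2n) - r‖ → 0`. The Jordan block `J_λ` has spectrum `{λ}` by Cayley–Hamilton,
and with the `L²` operator norm the matrices form a C⋆-algebra.
-/

open Matrix Filter

def jordanBlock (lam : ℂ) (k : ℕ) : Matrix (Fin k) (Fin k) ℂ :=
  Matrix.of fun i j => if (j : ℕ) = (i : ℕ) + 1 then 1 else if j = i then lam else 0

noncomputable def psdPow {k : ℕ} (P : Matrix (Fin k) (Fin k) ℂ) (hP : P.IsHermitian)
    (t : ℝ) : Matrix (Fin k) (Fin k) ℂ :=
  (hP.eigenvectorUnitary : Matrix (Fin k) (Fin k) ℂ) *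
    Matrix.diagonal (fun i => ((hP.eigenvalues i ^ t : ℝ) : ℂ)) *
    star (hP.eigenvectorUnitary : Matrix (Fin k) (Fin k) ℂ)

open Polynomial Topology

theorem spectrum_subset_singleton_of_isNilpotent_sub {R A : Type*} [Field R] [Ring A]
    [Algebra R A] {a : A} {c : R} (h : IsNilpotent (a - algebraMap R A c)) :
    spectrum R a ⊆ {c} := by
  intro z hz
  by_contra hzc
  refine spectrum.mem_iff.mp hz ?_
  have hunit : IsUnit (algebraMap R A (z - c)) :=
    (sub_ne_zero.mpr hzc).isUnit.map (algebraMap R A)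
  convert h.neg.isUnit_add_right_of_commute hunit (Algebra.commute_algebraMap_right _ _) using 1
  rw [map_sub]
  abel

theorem spectrum_inv_subset_sphere {𝕜 A : Type*} [NormedField 𝕜] [Ring A] [Algebra 𝕜 A]
    (u : Aˣ) {r : ℝ} (hu : spectrum 𝕜 (u : A) ⊆ Metric.sphere 0 r) :
    spectrum 𝕜 (↑u⁻¹ : A) ⊆ Metric.sphere 0 r⁻¹ := by
  rw [← spectrum.map_inv]
  intro z hz
  have hz' := hu (Set.mem_inv.mp hz)
  simp only [mem_sphere_zero_iff_norm, norm_inv] at hz' ⊢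
  rw [← hz', inv_inv]

section Gelfand

variable {A : Type*} [NormedRing A] [NormedAlgebra ℂ A] [CompleteSpace A] [Nontrivial A]

theorem nonneg_of_spectrum_subset_sphere {a : A} {r : ℝ}
    (ha : spectrum ℂ a ⊆ Metric.sphere 0 r) : 0 ≤ r := by
  obtain ⟨z, hz⟩ := spectrum.nonempty a
  exact mem_sphere_zero_iff_norm.mp (ha hz) ▸ norm_nonneg z

theorem spectralRadius_eq_of_spectrum_subset_sphere {a : A} {r : ℝ}
    (ha : spectrum ℂ a ⊆ Metric.sphere 0 r) : spectralRadius ℂ a = ENNReal.ofReal r := by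
  have hnorm : ∀ z ∈ spectrum ℂ a, (‖z‖₊ : ENNReal) = ENNReal.ofReal r := fun z hz => by
    rw [← mem_sphere_zero_iff_norm.mp (ha hz), ofReal_norm]
    rfl
  obtain ⟨z, hz⟩ := spectrum.nonempty a
  exact le_antisymm (iSup₂_le fun w hw => (hnorm w hw).le)
    ((hnorm z hz).symm.le.trans (le_iSup₂ (f := fun w _ => (‖w‖₊ : ENNReal)) z hz))

theorem tendsto_norm_pow_rpow_of_spectrum_subset_sphere {a : A} {r : ℝ}
    (ha : spectrum ℂ a ⊆ Metric.sphere 0 r) :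
    Tendsto (fun n : ℕ => ‖a ^ n‖ ^ (1 / n : ℝ)) atTop (𝓝 r) := by
  have h := spectrum.pow_nnnorm_pow_one_div_tendsto_nhds_spectralRadius a
  rw [spectralRadius_eq_of_spectrum_subset_sphere ha] at h
  simpa [Function.comp_def, ← ENNReal.toReal_rpow, nonneg_of_spectrum_subset_sphere ha] using
    (ENNReal.tendsto_toReal ENNReal.ofReal_ne_top).comp h

end Gelfand

theorem Real.sq_rpow_one_div_two_mul {y : ℝ} (hy : 0 ≤ y) (n : ℕ) :
    (y ^ 2) ^ (1 / (2 * n : ℝ)) = y ^ (1 / n : ℝ) := by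
  rw [← Real.rpow_natCast_mul hy]
  rcases n.eq_zero_or_pos with rfl | hn
  · simp
  · congr 1
    field_simp
    norm_num

section CStarAlgebra

variable {A : Type*} [CStarAlgebra A]

theorem le_norm_sq_of_mem_spectrum_star_mul_self [Nontrivial A] {a : A} {x : ℝ}
    (hx : x ∈ spectrum ℝ (star a * a)) : x ≤ ‖a‖ ^ 2 :=
  calc x ≤ ‖x‖ := Real.le_norm_self x
    _ ≤ ‖star a * a‖ := spectrum.norm_le_norm_of_mem hx
    _ = ‖a‖ ^ 2 := by rw [CStarRing.norm_star_mul_self, sq]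

theorem inv_norm_inv_sq_le_of_mem_spectrum_star_mul_self [Nontrivial A] (u : Aˣ) {x : ℝ}
    (hx : x ∈ spectrum ℝ (star (u : A) * u)) : (‖(↑u⁻¹ : A)‖ ^ 2)⁻¹ ≤ x := by
  have hx0 : 0 < x := by
    refine lt_of_le_of_ne (spectrum_star_mul_self_nonneg x hx) ?_
    rintro rfl
    exact spectrum.zero_notMem ℝ (star u * u).isUnit (by simpa using hx)
  have hinv : x⁻¹ ∈ spectrum ℝ (star (star (↑u⁻¹ : A)) * star (↑u⁻¹ : A)) := by
    have h := spectrum.map_inv (𝕜 := ℝ) (star u * u)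
    simp only [_root_.mul_inv_rev, ← star_inv, Units.val_mul, Units.coe_star] at h
    rw [star_star, ← h, Set.inv_mem_inv]
    exact hx
  refine inv_le_of_inv_le₀ hx0 ?_
  simpa using le_norm_sq_of_mem_spectrum_star_mul_self hinv

theorem rpow_le_norm_pow_rpow_of_mem_spectrum [Nontrivial A] (a : A) (n : ℕ) {x : ℝ}
    (hx : x ∈ spectrum ℝ (star (a ^ n) * a ^ n)) :
    x ^ (1 / (2 * n : ℝ)) ≤ ‖a ^ n‖ ^ (1 / n : ℝ) := by
  rw [← Real.sq_rpow_one_div_two_mul (norm_nonneg _)]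
  gcongr
  · exact spectrum_star_mul_self_nonneg x hx
  · exact le_norm_sq_of_mem_spectrum_star_mul_self hx

theorem inv_norm_inv_pow_rpow_le_rpow_of_mem_spectrum [Nontrivial A] (u : Aˣ) (n : ℕ) {x : ℝ}
    (hx : x ∈ spectrum ℝ (star ((u : A) ^ n) * (u : A) ^ n)) :
    (‖(↑u⁻¹ : A) ^ n‖ ^ (1 / n : ℝ))⁻¹ ≤ x ^ (1 / (2 * n : ℝ)) := by
  rw [← Real.sq_rpow_one_div_two_mul (norm_nonneg _), ← Real.inv_rpow (by positivity)]
  gcongr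
  simpa using inv_norm_inv_sq_le_of_mem_spectrum_star_mul_self (u ^ n) (by simpa using hx)

theorem norm_cfc_sub_algebraMap_le {f : ℝ → ℝ} {b : A} {r c : ℝ} (hc : 0 ≤ c)
    (h : ∀ x ∈ spectrum ℝ b, |f x - r| ≤ c) (hf : ContinuousOn f (spectrum ℝ b) := by cfc_cont_tac)
    (hb : IsSelfAdjoint b := by cfc_tac) :
    ‖cfc f b - algebraMap ℝ A r‖ ≤ c := by
  rw [← cfc_const r b, ← cfc_sub f (fun _ => r) b]
  exact norm_cfc_le hc h

theorem tendsto_cfc_rpow_star_pow_mul_pow_of_spectrum_subset_sphere {a : A} {r : ℝ}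
    (ha : spectrum ℂ a ⊆ Metric.sphere 0 r) :
    Tendsto (fun n : ℕ => cfc (fun x : ℝ => x ^ (1 / (2 * n : ℝ))) (star (a ^ n) * a ^ n))
      atTop (𝓝 (algebraMap ℝ A r)) := by
  rcases subsingleton_or_nontrivial A with hA | hA
  · simp [Subsingleton.elim _ (algebraMap ℝ A r)]
  obtain ⟨l, hl, hlx⟩ : ∃ l : ℕ → ℝ, Tendsto l atTop (𝓝 r) ∧
      ∀ n : ℕ, ∀ x ∈ spectrum ℝ (star (a ^ n) * a ^ n), l n ≤ x ^ (1 / (2 * n : ℝ)) := by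
    rcases (nonneg_of_spectrum_subset_sphere ha).eq_or_lt with rfl | hr
    · exact ⟨0, tendsto_const_nhds, fun n x hx =>
        Real.rpow_nonneg (spectrum_star_mul_self_nonneg x hx) _⟩
    obtain ⟨u, rfl⟩ : IsUnit a := (spectrum.zero_notMem_iff ℂ).mp fun h0 => by
      simpa [hr.ne] using ha h0
    refine ⟨fun n => (‖(↑u⁻¹ : A) ^ n‖ ^ (1 / n : ℝ))⁻¹, ?_,
      fun n x hx => inv_norm_inv_pow_rpow_le_rpow_of_mem_spectrum u n hx⟩
    simpa using (tendsto_norm_pow_rpow_of_spectrum_subset_sphere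
      (spectrum_inv_subset_sphere u ha)).inv₀ (inv_ne_zero hr.ne')
  have hu := tendsto_norm_pow_rpow_of_spectrum_subset_sphere ha
  refine tendsto_iff_norm_sub_tendsto_zero.mpr <| squeeze_zero (fun _ => norm_nonneg _)
    (fun n => norm_cfc_sub_algebraMap_le (le_max_of_le_left (abs_nonneg _))
      (fun x hx => abs_le_max_abs_abs (sub_le_sub_right (hlx n x hx) r)
        (sub_le_sub_right (rpow_le_norm_pow_rpow_of_mem_spectrum a n hx) r))
      (Real.continuous_rpow_const (by positivity)).continuousOn (.star_mul_self _)) ?_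
  simpa using (hl.sub_const r).abs.max (hu.sub_const r).abs

end CStarAlgebra

theorem jordanBlock_isUpperTriangular (lam : ℂ) (k : ℕ) :
    (jordanBlock lam k).IsUpperTriangular := by
  intro i j hij
  have : (j : ℕ) < i := hij
  simp only [jordanBlock, of_apply]
  rw [if_neg (by omega), if_neg (by omega)]

theorem charpoly_jordanBlock (lam : ℂ) (k : ℕ) :
    (jordanBlock lam k).charpoly = (X - C lam) ^ k := by
  rw [charpoly_of_isUpperTriangular _ (jordanBlock_isUpperTriangular lam k)]
  simp [jordanBlock]

theorem isNilpotent_jordanBlock_sub (lam : ℂ) (k : ℕ) :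
    IsNilpotent (jordanBlock lam k - algebraMap ℂ _ lam) :=
  ⟨k, by simpa [charpoly_jordanBlock] using aeval_self_charpoly (jordanBlock lam k)⟩

theorem spectrum_jordanBlock_subset (lam : ℂ) (k : ℕ) :
    spectrum ℂ (jordanBlock lam k) ⊆ {lam} :=
  spectrum_subset_singleton_of_isNilpotent_sub (isNilpotent_jordanBlock_sub lam k)

theorem psdPow_eq_cfc {k : ℕ} (P : Matrix (Fin k) (Fin k) ℂ) (hP : P.IsHermitian) (t : ℝ) :
    psdPow P hP t = cfc (fun x : ℝ => x ^ t) P := by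
  rw [hP.cfc_eq, IsHermitian.cfc, psdPow, Unitary.conjStarAlgAut_apply]
  rfl

theorem jordanBlock_symmetrized_rescaled_tendsto_general
    (lam : ℂ) (k : ℕ) :
    Tendsto
      (fun n : ℕ =>
        psdPow ((jordanBlock lam k ^ n)ᴴ * jordanBlock lam k ^ n)
          (Matrix.isHermitian_conjTranspose_mul_self _) (1 / (2 * (n : ℝ))))
      atTop (nhds (((‖lam‖ : ℝ) : ℂ) • (1 : Matrix (Fin k) (Fin k) ℂ))) := by
  -- The `L²` operator norm induces the entrywise topology, so it may be used to prove the limit.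
  open scoped Matrix.Norms.L2Operator in
  have h := tendsto_cfc_rpow_star_pow_mul_pow_of_spectrum_subset_sphere
    (a := jordanBlock lam k) (r := ‖lam‖) fun z hz => by
      rw [Set.mem_singleton_iff.mp (spectrum_jordanBlock_subset lam k hz)]
      simp
  simp_rw [psdPow_eq_cfc, ← star_eq_conjTranspose, Complex.coe_smul,
    ← Algebra.algebraMap_eq_smul_one]
  exact h

/-- For a `k × k` Jordan block `J_λ`, the Hermitian positive semidefinite
matrices `G_n = ((J_λ^n)ᴴ J_λ^n)^{1/(2n)}` converge to `|λ| · I_k` as `n → ∞`. -/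
theorem jordanBlock_symmetrized_rescaled_tendsto
    (lam : ℂ) (k : ℕ) (hk : 1 ≤ k) :
    Tendsto
      (fun n : ℕ =>
        psdPow ((jordanBlock lam k ^ n)ᴴ * jordanBlock lam k ^ n)
          (Matrix.isHermitian_conjTranspose_mul_self _) (1 / (2 * (n : ℝ))))
      atTop (nhds (((‖lam‖ : ℝ) : ℂ) • (1 : Matrix (Fin k) (Fin k) ℂ))) :=
  jordanBlock_symmetrized_rescaled_tendsto_general lam k
end
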